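/- Let h : ℝ → ℝ be monotone and B = ∏ j [v̲ j, v̄ j] a box. For each neuron i, the estimated output interval [h(z̲ i + θ i), h(z̄ i + θ i)] from Theorem 1 equals exactly the interval [min over B of h(∑ j W i j v j + θ i), max over B of h(∑ j W i j v j + θ i)]; however, the product box ∏ i [h(z̲ i + θ i), h(z̄ i + θ i)] may strictly contain the image of B under the layer (the estimate is generally not exact as a set in ℝ^m for m ≥ 2). -/

import Mathlib

/-!
A linear form `v ↦ ∑ j, w j * v j` is separable, so over a box it is minimised (maximised) by
minimising (maximising) each term on its own: take `v j` at the lower end of its interval when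
`w j ≥ 0` and at the upper end otherwise (and conversely). A monotone activation preserves least
and greatest elements, so each neuron's interval estimate is sharp. The box of these intervals is
still conservative as a set: with one input feeding two identical neurons the image of the layer is
a diagonal segment, while the box is the whole square.
-/

open Finset

section IntervalArithmetic

variable {ι R : Type*} [LinearOrder R] {w lo hi v : ι → R}

section Corners

variable [Zero R]

def lowerCorner (w lo hi : ι → R) : ι → R := fun j => if 0 ≤ w j then lo j else hi j

def upperCorner (w lo hi : ι → R) : ι → R := fun j => if 0 ≤ w j then hi j else lo j

lemma lowerCorner_mem_Icc (hle : lo ≤ hi) : lowerCorner w lo hi ∈ Set.Icc lo hi := by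
  constructor <;> intro j <;> unfold lowerCorner <;> split_ifs <;> simp [hle j]

lemma upperCorner_mem_Icc (hle : lo ≤ hi) : upperCorner w lo hi ∈ Set.Icc lo hi := by
  constructor <;> intro j <;> unfold upperCorner <;> split_ifs <;> simp [hle j]

end Corners

variable [Fintype ι] [Ring R]

lemma sum_mul_lowerCorner :
    ∑ j, w j * lowerCorner w lo hi j = ∑ j, if w j ≥ 0 then w j * lo j else w j * hi j := by
  simp only [lowerCorner, mul_ite, ge_iff_le]

lemma sum_mul_upperCorner :
    ∑ j, w j * upperCorner w lo hi j = ∑ j, if w j ≥ 0 then w j * hi j else w j * lo j := by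
  simp only [upperCorner, mul_ite, ge_iff_le]

variable [IsOrderedRing R]

lemma sum_mul_lowerCorner_le (hv : v ∈ Set.Icc lo hi) :
    ∑ j, w j * lowerCorner w lo hi j ≤ ∑ j, w j * v j := by
  refine sum_le_sum fun j _ => ?_
  unfold lowerCorner
  split_ifs with hw
  · exact mul_le_mul_of_nonneg_left (hv.1 j) hw
  · exact mul_le_mul_of_nonpos_left (hv.2 j) (not_le.1 hw).le

lemma sum_mul_le_sum_mul_upperCorner (hv : v ∈ Set.Icc lo hi) :
    ∑ j, w j * v j ≤ ∑ j, w j * upperCorner w lo hi j := by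
  refine sum_le_sum fun j _ => ?_
  unfold upperCorner
  split_ifs with hw
  · exact mul_le_mul_of_nonneg_left (hv.2 j) hw
  · exact mul_le_mul_of_nonpos_left (hv.1 j) (not_le.1 hw).le

lemma isLeast_image_sum_mul_Icc (hle : lo ≤ hi) :
    IsLeast ((fun v => ∑ j, w j * v j) '' Set.Icc lo hi) (∑ j, w j * lowerCorner w lo hi j) :=
  ⟨⟨_, lowerCorner_mem_Icc hle, rfl⟩, by
    rintro _ ⟨v, hv, rfl⟩
    exact sum_mul_lowerCorner_le hv⟩

lemma isGreatest_image_sum_mul_Icc (hle : lo ≤ hi) :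
    IsGreatest ((fun v => ∑ j, w j * v j) '' Set.Icc lo hi) (∑ j, w j * upperCorner w lo hi j) :=
  ⟨⟨_, upperCorner_mem_Icc hle, rfl⟩, by
    rintro _ ⟨v, hv, rfl⟩
    exact sum_mul_le_sum_mul_upperCorner hv⟩

lemma Monotone.isLeast_image_comp_sum_mul_Icc {g : R → R} (hg : Monotone g) (hle : lo ≤ hi) :
    IsLeast ((fun v => g (∑ j, w j * v j)) '' Set.Icc lo hi)
      (g (∑ j, if w j ≥ 0 then w j * lo j else w j * hi j)) := by
  rw [← sum_mul_lowerCorner, ← Function.comp_def, Set.image_comp]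
  exact hg.map_isLeast (isLeast_image_sum_mul_Icc hle)

lemma Monotone.isGreatest_image_comp_sum_mul_Icc {g : R → R} (hg : Monotone g) (hle : lo ≤ hi) :
    IsGreatest ((fun v => g (∑ j, w j * v j)) '' Set.Icc lo hi)
      (g (∑ j, if w j ≥ 0 then w j * hi j else w j * lo j)) := by
  rw [← sum_mul_upperCorner, ← Function.comp_def, Set.image_comp]
  exact hg.map_isGreatest (isGreatest_image_sum_mul_Icc hle)

lemma Monotone.image_layer_Icc_subset {κ : Type*} {h : R → R} (hh : Monotone h)
    (W : Matrix κ ι R) (θ : κ → R) (lo hi : ι → R) :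
    (fun v i => h (W.mulVec v i + θ i)) '' Set.Icc lo hi ⊆
      {y | ∀ i, h ((∑ j, if W i j ≥ 0 then W i j * lo j else W i j * hi j) + θ i) ≤ y i ∧
        y i ≤ h ((∑ j, if W i j ≥ 0 then W i j * hi j else W i j * lo j) + θ i)} := by
  rintro _ ⟨v, hv, rfl⟩ i
  rw [← sum_mul_lowerCorner, ← sum_mul_upperCorner]
  exact ⟨hh (add_le_add_left (sum_mul_lowerCorner_le hv) _),
    hh (add_le_add_left (sum_mul_le_sum_mul_upperCorner hv) _)⟩

end IntervalArithmetic

lemma setOf_exists_forall_le_and_le_eq_image {ι α β : Type*} [Preorder α] (lo hi : ι → α)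
    (f : (ι → α) → β) :
    {y | ∃ v : ι → α, (∀ j, lo j ≤ v j ∧ v j ≤ hi j) ∧ y = f v} = f '' Set.Icc lo hi := by
  ext y
  simp [Pi.le_def, forall_and, eq_comm]

lemma setOf_forall_le_and_le_eq_Icc {ι α : Type*} [Preorder α] (lo hi : ι → α) :
    {v : ι → α | ∀ j, lo j ≤ v j ∧ v j ≤ hi j} = Set.Icc lo hi := by
  ext v
  simp [Pi.le_def, forall_and]

theorem interval_estimate_componentwise_exact_but_conservative
    (m n : ℕ) (h : ℝ → ℝ)
    (hmono : ∀ v₁ v₂ : ℝ, v₁ ≤ v₂ → h v₁ ≤ h v₂)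
    (W : Matrix (Fin m) (Fin n) ℝ) (θ : Fin m → ℝ)
    (vlo vhi : Fin n → ℝ) (hle : ∀ j, vlo j ≤ vhi j) :
    (∀ i : Fin m,
      IsLeast {y : ℝ | ∃ v : Fin n → ℝ, (∀ j, vlo j ≤ v j ∧ v j ≤ vhi j) ∧
          y = h ((∑ j, W i j * v j) + θ i)}
        (h ((∑ j, if W i j ≥ 0 then W i j * vlo j else W i j * vhi j) + θ i)) ∧
      IsGreatest {y : ℝ | ∃ v : Fin n → ℝ, (∀ j, vlo j ≤ v j ∧ v j ≤ vhi j) ∧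
          y = h ((∑ j, W i j * v j) + θ i)}
        (h ((∑ j, if W i j ≥ 0 then W i j * vhi j else W i j * vlo j) + θ i))) ∧
    (∃ (h' : ℝ → ℝ) (W' : Matrix (Fin 2) (Fin 1) ℝ) (θ' : Fin 2 → ℝ)
        (a b : Fin 1 → ℝ),
      (∀ v₁ v₂ : ℝ, v₁ ≤ v₂ → h' v₁ ≤ h' v₂) ∧ (∀ j, a j ≤ b j) ∧
      ((fun v : Fin 1 → ℝ => fun i => h' ((W'.mulVec v) i + θ' i)) ''
          {v | ∀ j, a j ≤ v j ∧ v j ≤ b j}) ⊂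
        {y : Fin 2 → ℝ | ∀ i,
          h' ((∑ j, if W' i j ≥ 0 then W' i j * a j else W' i j * b j) + θ' i) ≤ y i ∧
          y i ≤ h' ((∑ j, if W' i j ≥ 0 then W' i j * b j else W' i j * a j) + θ' i)}) := by
  have hh : Monotone h := fun _ _ => hmono _ _
  refine ⟨fun i => ?_, ?_⟩
  · simp only [setOf_exists_forall_le_and_le_eq_image]
    have hneuron : Monotone fun s => h (s + θ i) := hh.comp (monotone_id.add_const _)
    exact ⟨hneuron.isLeast_image_comp_sum_mul_Icc hle,
      hneuron.isGreatest_image_comp_sum_mul_Icc hle⟩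
  · refine ⟨id, fun _ _ => 1, 0, 0, 1, fun _ _ hv => hv, fun _ => zero_le_one, ?_⟩
    rw [setOf_forall_le_and_le_eq_Icc]
    have hsub := monotone_id.image_layer_Icc_subset (fun _ _ => 1 : Matrix (Fin 2) (Fin 1) ℝ) 0 0 1
    refine (Set.ssubset_iff_of_subset hsub).2 ⟨![0, 1], fun i => by fin_cases i <;> simp, ?_⟩
    rintro ⟨v, -, hv⟩
    have hdiag : (![0, 1] : Fin 2 → ℝ) 0 = ![0, 1] 1 := (congrFun hv 0).symm.trans (congrFun hv 1)
    simp at hdiag
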